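/- For the Einstein 3-form G_a := (1/2) ε_{abcd} e^b ∧ F^{cd} built from a coframe (e^a) and a 2-form curvature F^{cd} = (1/2) F^{cd}{}_{b'c'} e^{b'} ∧ e^{c'} with F^{cd} = −F^{dc}, one has G_a = −(Ric^b{}_a − (1/2) S δ^b_a) e^{(3)}_b, where Ric_{ab} := h_{ab'} F^{a'b'}{}_{a'b}, S := h^{ab} Ric_{ab}, and e^{(3)}_b is the contraction of the coframe volume 4-form e^{(4)} = e^0∧e^1∧e^2∧e^3 with the b-th frame vector. In particular G_a = −G^b{}_a e^{(3)}_b where G^b{}_a is the Einstein tensor. -/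

import Mathlib

open scoped BigOperators

/-- The Minkowski metric diag(-1,1,1,1). -/
noncomputable def hM : Matrix (Fin 4) (Fin 4) ℝ := Matrix.diagonal ![-1, 1, 1, 1]

/-- The Levi-Civita symbol `ε_{abcd}` with `ε_{0123} = 1`. -/
noncomputable def eps (a b c d : Fin 4) : ℝ :=
  Matrix.det (Matrix.of fun i j => if ![a, b, c, d] i = j then (1 : ℝ) else 0)

/-- The coframe 1-forms `e^a` as generators of the exterior algebra of `ℝ⁴`. -/
noncomputable def ef (a : Fin 4) : ExteriorAlgebra ℝ (Fin 4 → ℝ) :=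
  ExteriorAlgebra.ι ℝ (Pi.single a (1 : ℝ))

/-- Interior product with the frame vector dual to `e^a`. -/
noncomputable def contr (a : Fin 4) :
    ExteriorAlgebra ℝ (Fin 4 → ℝ) →ₗ[ℝ] ExteriorAlgebra ℝ (Fin 4 → ℝ) :=
  CliffordAlgebra.contractLeft (LinearMap.proj a)

/-- Volume form `e⁽⁴⁾` and its contraction `e⁽³⁾_a`. -/
noncomputable def e4 : ExteriorAlgebra ℝ (Fin 4 → ℝ) := ef 0 * ef 1 * ef 2 * ef 3

noncomputable def e3 (a : Fin 4) : ExteriorAlgebra ℝ (Fin 4 → ℝ) := contr a e4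

/-- The curvature 2-form `F^{cd} := (1/2) F^{cd}{}_{b'c'} e^{b'} ∧ e^{c'}`. -/
noncomputable def Fform (F : Fin 4 → Fin 4 → Fin 4 → Fin 4 → ℝ) (c d : Fin 4) :
    ExteriorAlgebra ℝ (Fin 4 → ℝ) :=
  (1 / 2 : ℝ) • ∑ b', ∑ c', F c d b' c' • (ef b' * ef c')

/-- The Einstein 3-form `G_a := (1/2) ε_{abcd} e^b ∧ F^{cd}`. -/
noncomputable def Gform (F : Fin 4 → Fin 4 → Fin 4 → Fin 4 → ℝ) (a : Fin 4) :
    ExteriorAlgebra ℝ (Fin 4 → ℝ) :=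
  (1 / 2 : ℝ) • ∑ b, ∑ c, ∑ d, eps a b c d • (ef b * Fform F c d)

/-- The Ricci tensor `Ric_{ab} := h_{ab'} F^{a'b'}{}_{a'b}`. -/
noncomputable def Ric (F : Fin 4 → Fin 4 → Fin 4 → Fin 4 → ℝ) (a b : Fin 4) : ℝ :=
  ∑ b', ∑ a', hM a b' * F a' b' a' b

/-- The scalar curvature `S := h^{ab} Ric_{ab}`. -/
noncomputable def Scal (F : Fin 4 → Fin 4 → Fin 4 → Fin 4 → ℝ) : ℝ :=
  ∑ a, ∑ b, hM⁻¹ a b * Ric F a b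

/-- The Einstein tensor `G^b{}_a := Ric^b{}_a − (1/2) S δ^b_a`. -/
noncomputable def Gten (F : Fin 4 → Fin 4 → Fin 4 → Fin 4 → ℝ) (b a : Fin 4) : ℝ :=
  (∑ b', hM⁻¹ b b' * Ric F b' a) - (1 / 2 : ℝ) * Scal F * (if b = a then 1 else 0)

/-!
The key identity is `∑_b ε_{abcd} e^b = -ι_a ι_c ι_d e⁽⁴⁾`. Contracting the volume form with four
coordinate vectors gives the Levi-Civita symbol, since both are alternating in the four dual vectors
and agree on the standard basis; a 1-form is recovered from its contractions by the Euler identity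
`∑_b e^b ∧ ι_b ω = ω`, the operator `∑_b e^b ∧ ι_b` multiplying a `k`-form by `k`. Hence
`G_a = -½ F^{cd} ∧ ι_a ι_c ι_d e⁽⁴⁾`, and moving the 1-forms of `F^{cd}` through the contractions
with `e^p ∧ ι_x ω = δ^p_x ω - ι_x (e^p ∧ ω)` and `e^p ∧ e⁽⁴⁾ = 0` leaves `δ`-contractions of the
curvature against the `e⁽³⁾_b`. The metric cancels in `G^b{}_a`, which equals
`F^{a'b}{}_{a'a} - ½ F^{cd}{}_{cd} δ^b_a`.
-/

open Finset
open scoped Matrix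

theorem AlternatingMap.apply_eq_basis_det_smul {R M N ι : Type*} [CommRing R] [AddCommGroup M]
    [Module R M] [AddCommGroup N] [Module R N] [Fintype ι] [DecidableEq ι] (e : Module.Basis ι R M)
    (f : M [⋀^ι]→ₗ[R] N) (v : ι → M) : f v = e.det v • f e := by
  suffices f = e.det.smulRight (f e) from congr($this v)
  refine e.ext_alternating fun i hi => ?_
  let σ : Equiv.Perm ι := Equiv.ofBijective i (Finite.injective_iff_bijective.1 hi)
  change f (e ∘ σ) = e.det (e ∘ σ) • f e
  simp [AlternatingMap.map_perm, Module.Basis.det_self]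

lemma Pi.basisFun_dualBasis {R n : Type*} [CommRing R] [Fintype n] [DecidableEq n] :
    ⇑(Pi.basisFun R n).dualBasis = LinearMap.proj := by
  ext i v; simp

noncomputable def ExteriorAlgebra.contractLeftAlgHom (R M : Type*) [CommRing R] [AddCommGroup M]
    [Module R M] : ExteriorAlgebra R (Module.Dual R M) →ₐ[R] Module.End R (ExteriorAlgebra R M) :=
  ExteriorAlgebra.lift R
    ⟨CliffordAlgebra.contractLeft, fun d => LinearMap.ext (CliffordAlgebra.contractLeft_contractLeft d)⟩

lemma ef_mul_ef_anticomm (p q : Fin 4) : ef p * ef q = -(ef q * ef p) :=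
  eq_neg_of_add_eq_zero_left (ExteriorAlgebra.ι_add_mul_swap _ _)

lemma contr_ef_mul (a i : Fin 4) (x : ExteriorAlgebra ℝ (Fin 4 → ℝ)) :
    contr a (ef i * x) = (if a = i then x else 0) - ef i * contr a x := by
  unfold contr ef ExteriorAlgebra.ι
  rw [CliffordAlgebra.contractLeft_ι_mul]
  simp [Pi.single_apply, ite_smul]

lemma contr_ef (a i : Fin 4) : contr a (ef i) = if a = i then 1 else 0 := by
  unfold contr ef ExteriorAlgebra.ι
  rw [CliffordAlgebra.contractLeft_ι]
  simp [Pi.single_apply, apply_ite]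

lemma contr_comm (a b : Fin 4) (x : ExteriorAlgebra ℝ (Fin 4 → ℝ)) :
    contr a (contr b x) = -contr b (contr a x) :=
  CliffordAlgebra.contractLeft_comm _ _ _

lemma ef_mul_contr (p a : Fin 4) (x : ExteriorAlgebra ℝ (Fin 4 → ℝ)) :
    ef p * contr a x = (if a = p then x else 0) - contr a (ef p * x) := by
  rw [contr_ef_mul]; abel

lemma e4_eq_ιMulti : e4 = ExteriorAlgebra.ιMulti ℝ 4 fun i => Pi.single i 1 := by
  simp only [ExteriorAlgebra.ιMulti_apply, List.ofFn_succ, List.ofFn_zero, List.prod_cons,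
    List.prod_nil, mul_one, e4, ef, mul_assoc]
  rfl

lemma ef_mul_e4 (p : Fin 4) : ef p * e4 = 0 := by
  have hw : ¬ Function.Injective (Fin.cons p id : Fin 5 → Fin 4) := fun hw => by
    simpa using Fintype.card_le_of_injective _ hw
  have h := ExteriorAlgebra.ιMulti_eq_zero_of_not_inj (R := ℝ)
    (v := fun i => (Pi.single ((Fin.cons p id : Fin 5 → Fin 4) i) 1 : Fin 4 → ℝ))
    fun hv => hw fun i j hij => hv (by simp [hij])
  rw [ExteriorAlgebra.ιMulti_succ_apply] at h
  rwa [e4_eq_ιMulti]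

lemma ef_mul_e3 (p a : Fin 4) : ef p * e3 a = if a = p then e4 else 0 := by
  rw [e3, ef_mul_contr, ef_mul_e4, map_zero, sub_zero]

lemma ef_mul_contr_e3 (p a b : Fin 4) :
    ef p * contr a (e3 b) = (if a = p then e3 b else 0) - if b = p then e3 a else 0 := by
  rw [ef_mul_contr, ef_mul_e3, apply_ite (contr a), map_zero]; rfl

lemma ef_mul_contr_contr_e3 (p a b c : Fin 4) :
    ef p * contr a (contr b (e3 c)) = (if a = p then contr b (e3 c) else 0)
      - (if b = p then contr a (e3 c) else 0) + if c = p then contr a (e3 b) else 0 := by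
  rw [ef_mul_contr, ef_mul_contr_e3, map_sub, apply_ite (contr a), apply_ite (contr a), map_zero]
  abel

lemma contractLeftAlgHom_ιMulti_proj (x : Fin 4 → Fin 4) (ω : ExteriorAlgebra ℝ (Fin 4 → ℝ)) :
    ExteriorAlgebra.contractLeftAlgHom ℝ _ (ExteriorAlgebra.ιMulti ℝ 4 fun i => .proj (x i)) ω =
      contr (x 0) (contr (x 1) (contr (x 2) (contr (x 3) ω))) := by
  simp only [contr, ExteriorAlgebra.contractLeftAlgHom, ExteriorAlgebra.ιMulti_succ_apply,
    ExteriorAlgebra.ιMulti_apply, List.ofFn_zero, List.prod_nil, mul_one, map_mul,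
    ExteriorAlgebra.lift_ι_apply, Module.End.mul_apply]
  rfl

lemma det_dualBasis_proj (a b c d : Fin 4) :
    (Pi.basisFun ℝ (Fin 4)).dualBasis.det (fun i => .proj (![a, b, c, d] i)) = eps a b c d := by
  rw [Module.Basis.det_apply, eps, ← Matrix.det_transpose]
  congr 1
  ext i j
  simp [Module.Basis.toMatrix_apply, Pi.single_apply]

lemma contr_contr_contr_e3 (a b c d : Fin 4) :
    contr a (contr b (contr c (e3 d))) = algebraMap ℝ _ (eps a b c d) := by
  let f : Module.Dual ℝ (Fin 4 → ℝ) [⋀^Fin 4]→ₗ[ℝ] ExteriorAlgebra ℝ (Fin 4 → ℝ) :=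
    (LinearMap.applyₗ e4).compAlternatingMap
      ((ExteriorAlgebra.contractLeftAlgHom ℝ _).toLinearMap.compAlternatingMap
        (ExteriorAlgebra.ιMulti ℝ 4))
  have hbasis : f (Pi.basisFun ℝ (Fin 4)).dualBasis = 1 := by
    rw [Pi.basisFun_dualBasis]
    refine (contractLeftAlgHom_ιMulti_proj id e4).trans ?_
    simp [e4, mul_assoc, contr_ef_mul, contr_ef]
  have hx := contractLeftAlgHom_ιMulti_proj ![a, b, c, d] e4
  simp only [Matrix.cons_val_zero, Matrix.cons_val_one, Matrix.cons_val] at hx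
  rw [e3, ← hx]
  show f (fun i => .proj (![a, b, c, d] i)) = _
  rw [f.apply_eq_basis_det_smul (Pi.basisFun ℝ (Fin 4)).dualBasis, det_dualBasis_proj, hbasis,
    Algebra.algebraMap_eq_smul_one]

lemma sum_ef_mul_contr_e4 : ∑ b, ef b * contr b e4 = (4 : ℕ) • e4 := by
  change ∑ b, ef b * e3 b = _
  simp [ef_mul_e3]

lemma sum_ef_mul_contr_contr (a : Fin 4) (x : ExteriorAlgebra ℝ (Fin 4 → ℝ)) :
    ∑ b, ef b * contr b (contr a x) = contr a (∑ b, ef b * contr b x) - contr a x := by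
  simp only [map_sum, contr_ef_mul, contr_comm a, mul_neg, sum_sub_distrib, sum_neg_distrib,
    sum_ite_eq, mem_univ, if_true]
  abel

lemma sum_ef_mul_contr_contr_contr_e3 (a b c : Fin 4) :
    ∑ x, ef x * contr x (contr a (contr b (e3 c))) = contr a (contr b (e3 c)) := by
  rw [sum_ef_mul_contr_contr, sum_ef_mul_contr_contr, e3, sum_ef_mul_contr_contr, sum_ef_mul_contr_e4]
  simp only [map_sub, map_nsmul]
  module

lemma sum_eps_smul_ef (a c d : Fin 4) :
    ∑ b, eps a b c d • ef b = -contr a (contr c (e3 d)) := by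
  rw [← sum_ef_mul_contr_contr_contr_e3, ← sum_neg_distrib]
  refine sum_congr rfl fun b _ => ?_
  rw [contr_comm b a, contr_contr_contr_e3, mul_neg, neg_neg, ← Algebra.commutes,
    ← Algebra.smul_def]

lemma commute_ef_ef_mul_ef (b p q : Fin 4) : Commute (ef b) (ef p * ef q) := by
  rw [Commute, SemiconjBy, ← mul_assoc, ef_mul_ef_anticomm b p, neg_mul, mul_assoc,
    ef_mul_ef_anticomm b q, mul_neg, neg_neg, mul_assoc]

lemma commute_ef_Fform (F : Fin 4 → Fin 4 → Fin 4 → Fin 4 → ℝ) (b c d : Fin 4) :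
    Commute (ef b) (Fform F c d) :=
  .smul_right (.sum_right _ _ _ fun p _ => .sum_right _ _ _ fun q _ =>
    (commute_ef_ef_mul_ef b p q).smul_right _) _

lemma Gform_eq_neg_sum_Fform_mul (F : Fin 4 → Fin 4 → Fin 4 → Fin 4 → ℝ) (a : Fin 4) :
    Gform F a = -(1 / 2 : ℝ) • ∑ c, ∑ d, Fform F c d * contr a (contr c (e3 d)) := by
  have h : ∑ b, ∑ c, ∑ d, eps a b c d • (ef b * Fform F c d) =
      ∑ c, ∑ d, Fform F c d * ∑ b, eps a b c d • ef b := by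
    rw [sum_comm]
    refine sum_congr rfl fun c _ => ?_
    rw [sum_comm]
    refine sum_congr rfl fun d _ => ?_
    rw [mul_sum]
    refine sum_congr rfl fun b _ => ?_
    rw [(commute_ef_Fform F b c d).eq, mul_smul_comm]
  simp_rw [Gform, h, sum_eps_smul_ef, mul_neg, sum_neg_distrib, smul_neg, neg_smul]

lemma sum_smul_ef_mul_ef_mul_contr_contr_e3 (T : Fin 4 → Fin 4 → ℝ) (hT : ∀ p q, T p q = -T q p)
    (x y z : Fin 4) :
    ∑ p, ∑ q, T p q • (ef p * ef q * contr x (contr y (e3 z))) =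
      (-2 : ℝ) • (T y z • e3 x + T z x • e3 y + T x y • e3 z) := by
  simp only [mul_assoc, ef_mul_contr_contr_e3, mul_add, mul_sub, mul_ite, mul_zero,
    ef_mul_contr_e3, smul_add, smul_sub, smul_ite, smul_zero, sum_add_distrib, sum_sub_distrib,
    sum_ite_eq, mem_univ, if_true]
  rw [hT y x, hT x z, hT z y]
  module

lemma Fform_mul_contr_contr_e3 (F : Fin 4 → Fin 4 → Fin 4 → Fin 4 → ℝ)
    (hF2 : ∀ c d b' c', F c d b' c' = - F c d c' b') (c d x y z : Fin 4) :
    Fform F c d * contr x (contr y (e3 z)) =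
      -(F c d y z • e3 x + F c d z x • e3 y + F c d x y • e3 z) := by
  simp only [Fform, smul_mul_assoc, sum_mul]
  rw [sum_smul_ef_mul_ef_mul_contr_contr_e3 (F c d) (hF2 c d)]
  module

lemma Gform_eq (F : Fin 4 → Fin 4 → Fin 4 → Fin 4 → ℝ)
    (hF1 : ∀ c d b' c', F c d b' c' = - F d c b' c')
    (hF2 : ∀ c d b' c', F c d b' c' = - F c d c' b') (a : Fin 4) :
    Gform F a = (1 / 2 * ∑ c, ∑ d, F c d c d) • e3 a - ∑ c, (∑ d, F d c d a) • e3 c := by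
  have h : ∑ c, ∑ d, F c d a c • e3 d = -∑ c, (∑ d, F d c d a) • e3 c := by
    rw [sum_comm, ← sum_neg_distrib]
    refine sum_congr rfl fun c _ => ?_
    rw [sum_smul, ← sum_neg_distrib]
    refine sum_congr rfl fun d _ => ?_
    rw [hF2, neg_smul]
  have h' : ∑ c, ∑ d, F c d d a • e3 c = -∑ c, (∑ d, F d c d a) • e3 c := by
    rw [← sum_neg_distrib]
    refine sum_congr rfl fun c _ => ?_
    rw [sum_smul, ← sum_neg_distrib]
    refine sum_congr rfl fun d _ => ?_
    rw [hF1, neg_smul]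
  simp only [Gform_eq_neg_sum_Fform_mul, Fform_mul_contr_contr_e3 F hF2, sum_neg_distrib,
    smul_neg, neg_smul, neg_neg, sum_add_distrib]
  rw [h, h']
  simp only [← sum_smul]
  module

lemma hM_inv_mul_self : hM⁻¹ * hM = 1 :=
  Matrix.nonsing_inv_mul _ (by simp [hM, Matrix.det_diagonal, Fin.prod_univ_four])

lemma hM_inv_transpose : hM⁻¹ᵀ = hM⁻¹ := by
  rw [Matrix.transpose_nonsing_inv, hM, Matrix.diagonal_transpose]

lemma sum_hM_inv_mul_Ric (F : Fin 4 → Fin 4 → Fin 4 → Fin 4 → ℝ) (b a : Fin 4) :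
    ∑ b', hM⁻¹ b b' * Ric F b' a = ∑ a', F a' b a' a := by
  let G : Fin 4 → ℝ := fun b'' => ∑ a', F a' b'' a' a
  have hRic : (fun b' => Ric F b' a) = hM *ᵥ G := by
    ext b'; simp [G, Ric, Matrix.mulVec, dotProduct, mul_sum]
  calc ∑ b', hM⁻¹ b b' * Ric F b' a = (hM⁻¹ *ᵥ (hM *ᵥ G)) b := by
        rw [← hRic]; rfl
    _ = G b := by rw [Matrix.mulVec_mulVec, hM_inv_mul_self, Matrix.one_mulVec]

lemma Scal_eq (F : Fin 4 → Fin 4 → Fin 4 → Fin 4 → ℝ) : Scal F = ∑ c, ∑ d, F c d c d := by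
  calc Scal F = ∑ b, ∑ b', hM⁻¹ b b' * Ric F b' b := by
        rw [Scal, sum_comm]
        refine sum_congr rfl fun b _ => sum_congr rfl fun b' _ => ?_
        rw [← Matrix.transpose_apply hM⁻¹, hM_inv_transpose]
    _ = ∑ b, ∑ a', F a' b a' b := by simp_rw [sum_hM_inv_mul_Ric]
    _ = ∑ c, ∑ d, F c d c d := sum_comm

/-- `G_a = −(Ric^b{}_a − (1/2) S δ^b_a) e⁽³⁾_b = −G^b{}_a e⁽³⁾_b`. -/
theorem einstein_three_form_eq (F : Fin 4 → Fin 4 → Fin 4 → Fin 4 → ℝ)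
    (hF1 : ∀ c d b' c', F c d b' c' = - F d c b' c')
    (hF2 : ∀ c d b' c', F c d b' c' = - F c d c' b') (a : Fin 4) :
    Gform F a = - ∑ b, Gten F b a • e3 b := by
  simp only [Gform_eq F hF1 hF2, Gten, sum_hM_inv_mul_Ric, Scal_eq, sub_smul, sum_sub_distrib,
    mul_ite, mul_one, mul_zero, ite_smul, zero_smul, sum_ite_eq', mem_univ, if_true]
  abel
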